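/- There exists a constant d₁ > 0 (one may take d₁ = 1/320) such that the following holds for every n and every real n×n matrix A with ‖A eᵢ‖ = 1 for i = 1,…,n: for every σ₁ ⊆ {1,…,n} with |σ₁| ≤ d₁ n ‖A‖⁻² there exists σ₂ ⊆ {1,…,n} \ σ₁ with |σ₂| ≥ d₁ n ‖A‖⁻² such that for every i ∈ σ₂, the orthogonal projection of A eᵢ onto span{A eⱼ : j ∈ (σ₁ ∪ σ₂) \ {i}} has norm strictly less than 1/√2. -/

import Mathlib

open scoped RealInnerProductSpace BigOperators

/-- The Euclidean operator norm of a real matrix: `sup {‖Ax‖ : ‖x‖ = 1}`. -/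
noncomputable def opNorm {m n : ℕ} (A : Matrix (Fin m) (Fin n) ℝ) : ℝ :=
  sSup {c : ℝ | ∃ x : EuclideanSpace ℝ (Fin n), ‖x‖ = 1 ∧ c = ‖Matrix.toEuclideanLin A x‖}

/-- The matrix of the orthogonal projection of `ℝⁿ` onto the subspace `U`. -/
noncomputable def projMatrix {n : ℕ} (U : Submodule ℝ (EuclideanSpace ℝ (Fin n))) :
    Matrix (Fin n) (Fin n) ℝ :=
  Matrix.toEuclideanLin.symm (U.subtype ∘ₗ (Submodule.orthogonalProjectionOnto U).toLinearMap)

/-- The minimal stretch of a matrix `A` on a subspace `U`: `inf {‖Ax‖ : x ∈ U, ‖x‖ = 1}`. -/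
noncomputable def minStretch {m n : ℕ} (A : Matrix (Fin m) (Fin n) ℝ)
    (U : Submodule ℝ (EuclideanSpace ℝ (Fin n))) : ℝ :=
  sInf {c : ℝ | ∃ x ∈ U, ‖x‖ = 1 ∧ c = ‖Matrix.toEuclideanLin A x‖}

/-!
The columns `vᵢ = Aeᵢ` form a Bessel sequence with bound `C = ‖A‖²`, so for every subspace `V`
the masses `‖P_V vᵢ‖²` add up to at most `dim V · C`. For `V₁ = span{vⱼ : j ∈ σ₁}` this leaves at
least `(1 - 5d)n` indices `j ∉ σ₁` with `‖P_{V₁} vⱼ‖² ≤ 1/4`, whose components `bⱼ` orthogonal to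
`V₁` satisfy `‖bⱼ‖² ≥ 3/4`; the `bⱼ` are again a Bessel sequence with bound `C`.

Among these indices choose `m = ⌈dn/C⌉` maximizing the Gram determinant of the `bⱼ` (by the same
mass count, some `m` of them are linearly independent). The Gram determinant is `dist(bᵢ, Wᵢ)²`
times the Gram determinant of the others, `Wᵢ` being the span of the other chosen `b`'s, so by
maximality no `bⱼ` is farther from `Wᵢ` than `bᵢ`. If `dist(bᵢ, Wᵢ)² ≤ 1/2`, every `bⱼ` would keep
mass `≥ 1/4` in the `(m - 1)`-dimensional `Wᵢ`, which the Bessel bound forbids when `9d ≤ 1`.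
Finally the projection onto `V₁ᗮ` is a contraction mapping `span{vⱼ : j ∈ (σ₁ ∪ σ₂) \ {i}}` into
`Wᵢ`, so the distance from `vᵢ` to that span is at least `dist(bᵢ, Wᵢ) > 1/√2`.
-/

open Module Submodule

theorem exists_linearIndependent_comp_of_forall_exists_notMem {K V ι : Type*} [DivisionRing K]
    [AddCommGroup V] [Module K V] (w : ι → V) {m : ℕ}
    (h : ∀ W : Submodule K V, finrank K W < m → ∃ j, w j ∉ W) :
    ∃ f : Fin m → ι, LinearIndependent K (w ∘ f) := by
  suffices ∀ k ≤ m, ∃ f : Fin k → ι, LinearIndependent K (w ∘ f) from this m le_rfl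
  intro k hk
  induction k with
  | zero => exact ⟨Fin.elim0, linearIndependent_empty_type⟩
  | succ k ih =>
    obtain ⟨f, hf⟩ := ih (by omega)
    obtain ⟨j, hj⟩ := h (span K (Set.range (w ∘ f)))
      ((finrank_range_le_card _).trans_lt (by simpa using hk))
    exact ⟨Fin.snoc f j, by rw [Fin.comp_snoc, linearIndependent_finSnoc]; exact ⟨hf, hj⟩⟩

theorem finrank_span_image_finset_le {K V ι : Type*} [DivisionRing K] [AddCommGroup V]
    [Module K V] (v : ι → V) (s : Finset ι) : finrank K (span K (v '' s)) ≤ s.card := by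
  classical
  rw [← Finset.coe_image]
  exact (finrank_span_finset_le_card _).trans Finset.card_image_le

section SpanExcept

variable (R : Type*) {M κ : Type*} [Semiring R] [AddCommMonoid M] [Module R M]

def spanExcept (w : κ → M) (k : κ) : Submodule R M :=
  span R (Set.range fun l : {l // l ≠ k} => w l)

theorem spanExcept_update_self [DecidableEq κ] (w : κ → M) (k : κ) (x : M) :
    spanExcept R (Function.update w k x) k = spanExcept R w k := by
  rw [spanExcept, spanExcept,
    Function.update_comp_eq_of_forall_ne' w x fun l : {l // l ≠ k} => l.2]

end SpanExcept

section Bessel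

variable {E : Type*} [NormedAddCommGroup E] [InnerProductSpace ℝ E] {ι : Type*} [Fintype ι]

def IsBesselSequence (v : ι → E) (C : ℝ) : Prop :=
  ∀ y, ∑ i, ⟪v i, y⟫ ^ 2 ≤ C * ‖y‖ ^ 2

theorem isBesselSequence_apply_orthonormalBasis {F : Type*} [NormedAddCommGroup F]
    [InnerProductSpace ℝ F] [CompleteSpace E] [CompleteSpace F] (L : E →L[ℝ] F)
    (b : OrthonormalBasis ι ℝ E) : IsBesselSequence (fun i => L (b i)) (‖L‖ ^ 2) := by
  intro y
  calc ∑ i, ⟪L (b i), y⟫ ^ 2 = ‖ContinuousLinearMap.adjoint L y‖ ^ 2 := by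
        simp_rw [← ContinuousLinearMap.adjoint_inner_right, b.sum_sq_inner_right]
    _ ≤ (‖L‖ * ‖y‖) ^ 2 := by
        gcongr
        simpa using (ContinuousLinearMap.adjoint L).le_opNorm y
    _ = ‖L‖ ^ 2 * ‖y‖ ^ 2 := mul_pow _ _ _

namespace IsBesselSequence

variable {v : ι → E} {C : ℝ}

theorem one_le_of_norm_eq_one (hv : IsBesselSequence v C) {i : ι} (hi : ‖v i‖ = 1) : 1 ≤ C := by
  have hbound := hv (v i)
  have hterm : ⟪v i, v i⟫ ^ 2 ≤ ∑ j, ⟪v j, v i⟫ ^ 2 :=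
    Finset.single_le_sum (f := fun j => ⟪v j, v i⟫ ^ 2) (fun j _ => sq_nonneg _)
      (Finset.mem_univ i)
  rw [real_inner_self_eq_norm_sq, hi] at hterm
  rw [hi] at hbound
  linarith

theorem starProjection (hv : IsBesselSequence v C) (V : Submodule ℝ E)
    [V.HasOrthogonalProjection] : IsBesselSequence (fun i => V.starProjection (v i)) C := by
  intro y
  -- `C` may be negative a priori; the Bessel bound at `Vᗮ.starProjection y` supplies the sign.
  have hperp : 0 ≤ C * ‖Vᗮ.starProjection y‖ ^ 2 :=
    (Finset.sum_nonneg fun _ _ => sq_nonneg _).trans (hv _)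
  calc ∑ i, ⟪V.starProjection (v i), y⟫ ^ 2 = ∑ i, ⟪v i, V.starProjection y⟫ ^ 2 := by
        simp_rw [inner_starProjection_left_eq_right]
    _ ≤ C * ‖V.starProjection y‖ ^ 2 := hv _
    _ ≤ C * ‖y‖ ^ 2 := by
        rw [norm_sq_eq_add_norm_sq_starProjection y V]
        linarith

theorem sum_norm_sq_starProjection_le (hv : IsBesselSequence v C) (V : Submodule ℝ E)
    [FiniteDimensional ℝ V] :
    ∑ i, ‖V.starProjection (v i)‖ ^ 2 ≤ finrank ℝ V * C := by
  let b := stdOrthonormalBasis ℝ V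
  have hproj : ∀ x, ‖V.starProjection x‖ ^ 2 = ∑ s, ⟪(b s : E), x⟫ ^ 2 := fun x => by
    rw [starProjection_apply, norm_coe, ← b.sum_sq_inner_right]
    simp_rw [inner_orthogonalProjectionOnto_eq_of_mem_left]
  calc ∑ i, ‖V.starProjection (v i)‖ ^ 2 = ∑ s, ∑ i, ⟪v i, (b s : E)⟫ ^ 2 := by
        simp_rw [hproj, real_inner_comm (v _)]
        exact Finset.sum_comm
    _ ≤ ∑ _s, C := Finset.sum_le_sum fun s _ => by
        simpa [norm_coe, b.orthonormal.1 s] using hv (b s : E)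
    _ = finrank ℝ V * C := by simp

theorem mul_card_filter_lt_norm_sq_starProjection_le (hv : IsBesselSequence v C)
    (V : Submodule ℝ E) [FiniteDimensional ℝ V] (a : ℝ) :
    a * (Finset.univ.filter fun i => a < ‖V.starProjection (v i)‖ ^ 2).card ≤
      finrank ℝ V * C := by
  calc a * (Finset.univ.filter fun i => a < ‖V.starProjection (v i)‖ ^ 2).card
      = ∑ _i ∈ Finset.univ.filter fun i => a < ‖V.starProjection (v i)‖ ^ 2, a := by
        rw [Finset.sum_const, nsmul_eq_mul, mul_comm]
    _ ≤ ∑ i ∈ Finset.univ.filter fun i => a < ‖V.starProjection (v i)‖ ^ 2,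
          ‖V.starProjection (v i)‖ ^ 2 :=
        Finset.sum_le_sum fun i hi => (Finset.mem_filter.1 hi).2.le
    _ ≤ ∑ i, ‖V.starProjection (v i)‖ ^ 2 :=
        Finset.sum_le_sum_of_subset_of_nonneg (Finset.filter_subset _ _) fun _ _ _ => sq_nonneg _
    _ ≤ finrank ℝ V * C := hv.sum_norm_sq_starProjection_le V

end IsBesselSequence

end Bessel

section FiniteDimensional

open Matrix

variable {E : Type*} [NormedAddCommGroup E] [InnerProductSpace ℝ E] [FiniteDimensional ℝ E]

theorem det_gram_eq_norm_sq_mul_det_gram {κ : Type*} [Fintype κ] [DecidableEq κ] (w : κ → E)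
    (k : κ) :
    (gram ℝ w).det =
      ‖(spanExcept ℝ w k)ᗮ.starProjection (w k)‖ ^ 2 *
        (gram ℝ fun l : {l // l ≠ k} => w l).det := by
  set W := spanExcept ℝ w k
  set d := Wᗮ.starProjection (w k)
  have hdW : ∀ l : {l // l ≠ k}, ⟪d, w l⟫ = 0 := fun l =>
    inner_left_of_mem_orthogonal (subset_span (Set.mem_range_self l)) (starProjection_apply_mem _ _)
  obtain ⟨c, hc⟩ := (mem_span_range_iff_exists_fun ℝ).1 (W.starProjection_apply_mem (w k))
  -- Row `k` minus the combination of the other rows that represents `W.starProjection (w k)` is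
  -- `(⟪d, w j⟫)ⱼ`, which vanishes off the diagonal.
  set c' : κ → ℝ := fun l => if h : l = k then 1 else -c ⟨l, h⟩
  have hrow : (fun j => ⟪d, w j⟫) = ∑ l, c' l • gram ℝ w l := by
    ext j
    rw [Finset.sum_apply, Fintype.sum_eq_add_sum_subtype_ne _ k]
    have hc' : ∀ l : {l // l ≠ k}, c' l = -c l := fun l => dif_neg l.2
    simp only [Pi.smul_apply, smul_eq_mul, gram_apply, hc', neg_mul, Finset.sum_neg_distrib]
    rw [show c' k = 1 from dif_pos rfl, one_mul, ← sub_eq_add_neg,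
      show d = w k - W.starProjection (w k) from starProjection_orthogonal_val _, ← hc,
      inner_sub_left, sum_inner]
    simp_rw [real_inner_smul_left]
  have hM : ((gram ℝ w).updateRow k fun j => ⟪d, w j⟫).det = (gram ℝ w).det := by
    rw [hrow, det_updateRow_sum]; simp [c']
  rw [← hM, twoBlockTriangular_det' _ (· = k) ?_]
  · congr 1
    · convert det_eq_elem_of_subsingleton _ (⟨k, rfl⟩ : {l // l = k})
      simpa [toSquareBlockProp, toBlock, d] using (re_inner_starProjection_eq_normSq Wᗮ (w k)).symm
    · congr 1
      ext i j
      simp [toSquareBlockProp, toBlock, updateRow_ne i.2]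
  · rintro i rfl j hj
    simpa using hdW ⟨j, hj⟩

theorem exists_linearIndependent_forall_norm_starProjection_orthogonal_le {ι : Type*} [Finite ι]
    {m : ℕ} (w : ι → E) (h : ∃ f : Fin m → ι, LinearIndependent ℝ (w ∘ f)) :
    ∃ f : Fin m → ι, LinearIndependent ℝ (w ∘ f) ∧ ∀ k j,
      ‖(spanExcept ℝ (w ∘ f) k)ᗮ.starProjection (w j)‖ ≤
        ‖(spanExcept ℝ (w ∘ f) k)ᗮ.starProjection (w (f k))‖ := by
  obtain ⟨f₀, hf₀⟩ := h
  have : Nonempty (Fin m → ι) := ⟨f₀⟩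
  obtain ⟨f, hf⟩ := Finite.exists_max fun f : Fin m → ι => (gram ℝ (w ∘ f)).det
  have hpos : 0 < (gram ℝ (w ∘ f)).det :=
    ((posSemidef_gram ℝ _).det_nonneg.lt_of_ne'
      (det_gram_ne_zero_iff_linearIndependent.2 hf₀)).trans_le (hf f₀)
  refine ⟨f, linearIndependent_of_det_gram_ne_zero hpos.ne', fun k j => ?_⟩
  have hle := hf (Function.update f k j)
  rw [Function.comp_update, det_gram_eq_norm_sq_mul_det_gram _ k, spanExcept_update_self,
    Function.update_self, Function.update_comp_eq_of_forall_ne' _ _ fun l : {l // l ≠ k} => l.2,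
    det_gram_eq_norm_sq_mul_det_gram _ k] at hle
  rw [det_gram_eq_norm_sq_mul_det_gram _ k] at hpos
  exact pow_le_pow_iff_left₀ (norm_nonneg _) (norm_nonneg _) two_ne_zero |>.1 <|
    le_of_mul_le_mul_right hle (pos_of_mul_pos_right hpos (sq_nonneg _))

theorem norm_starProjection_orthogonal_map_le {U W : Submodule ℝ E} {Q : E →L[ℝ] E}
    (hQ : ‖Q‖ ≤ 1) (hUW : U ≤ W.comap (Q : E →ₗ[ℝ] E)) (x : E) :
    ‖Wᗮ.starProjection (Q x)‖ ≤ ‖Uᗮ.starProjection x‖ := by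
  rw [starProjection_orthogonal_val, starProjection_orthogonal_val, starProjection_minimal]
  calc ⨅ y : W, ‖Q x - y‖ ≤ ‖Q x - Q (U.starProjection x)‖ :=
        ciInf_le ⟨0, Set.forall_mem_range.2 fun _ => norm_nonneg _⟩
          (⟨_, hUW (U.starProjection_apply_mem x)⟩ : W)
    _ = ‖Q (x - U.starProjection x)‖ := by rw [map_sub]
    _ ≤ ‖x - U.starProjection x‖ := Q.le_of_opNorm_le hQ _ |>.trans_eq (one_mul _)

theorem span_image_erase_union_image_le_comap_spanExcept {ι : Type*} [DecidableEq ι] (v : ι → E)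
    (σ : Finset ι) {m : ℕ} (f : Fin m → ι) (k : Fin m) :
    span ℝ (v '' ↑((σ ∪ Finset.univ.image f).erase (f k))) ≤
      (spanExcept ℝ (fun l => (span ℝ (v '' σ))ᗮ.starProjection (v (f l))) k).comap
        ((span ℝ (v '' σ))ᗮ.starProjection : E →ₗ[ℝ] E) := by
  refine span_le.2 ?_
  rintro _ ⟨j, hj, rfl⟩
  obtain ⟨hjk, hj⟩ := Finset.mem_erase.1 (Finset.mem_coe.1 hj)
  rcases Finset.mem_union.1 hj with hjσ | hjf
  · rw [SetLike.mem_coe, mem_comap, ContinuousLinearMap.coe_coe,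
      starProjection_orthogonal_apply_eq_zero (subset_span (Set.mem_image_of_mem v hjσ))]
    exact zero_mem _
  · obtain ⟨l, -, rfl⟩ := Finset.mem_image.1 hjf
    exact subset_span ⟨⟨l, fun hlk => hjk (hlk ▸ rfl)⟩, rfl⟩

namespace IsBesselSequence

variable {ι : Type*} [Fintype ι] {C : ℝ}

theorem card_le_card_filter_add_mul_card [DecidableEq ι] {v : ι → E} (hv : IsBesselSequence v C)
    (hC : 0 ≤ C) (σ : Finset ι) :
    (Fintype.card ι : ℝ) ≤ (Finset.univ.filter fun j =>
        j ∉ σ ∧ ‖(span ℝ (v '' σ)).starProjection (v j)‖ ^ 2 ≤ 1 / 4).card +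
      (1 + 4 * C) * σ.card := by
  set V := span ℝ (v '' σ)
  set S := Finset.univ.filter fun j => j ∉ σ ∧ ‖V.starProjection (v j)‖ ^ 2 ≤ 1 / 4
  set B := Finset.univ.filter fun j => 1 / 4 < ‖V.starProjection (v j)‖ ^ 2
  have hB : 1 / 4 * (B.card : ℝ) ≤ finrank ℝ V * C :=
    hv.mul_card_filter_lt_norm_sq_starProjection_le V (1 / 4)
  have hrank : (finrank ℝ V : ℝ) * C ≤ σ.card * C :=
    mul_le_mul_of_nonneg_right (by exact_mod_cast finrank_span_image_finset_le v σ) hC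
  have hsub : Finset.univ ⊆ S ∪ σ ∪ B := fun j _ => by
    by_cases hj : j ∈ σ
    · exact Finset.mem_union_left _ (Finset.mem_union_right _ hj)
    rcases le_or_gt (‖V.starProjection (v j)‖ ^ 2) (1 / 4) with hjV | hjV
    · exact Finset.mem_union_left _
        (Finset.mem_union_left _ (Finset.mem_filter.2 ⟨Finset.mem_univ _, hj, hjV⟩))
    · exact Finset.mem_union_right _ (Finset.mem_filter.2 ⟨Finset.mem_univ _, hjV⟩)
  have hcover : Fintype.card ι ≤ S.card + σ.card + B.card :=
    calc Fintype.card ι = (Finset.univ : Finset ι).card := Finset.card_univ.symm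
      _ ≤ (S ∪ σ ∪ B).card := Finset.card_le_card hsub
      _ ≤ (S ∪ σ).card + B.card := Finset.card_union_le _ _
      _ ≤ S.card + σ.card + B.card := by gcongr; exact Finset.card_union_le _ _
  have hcover' : (Fintype.card ι : ℝ) ≤ S.card + σ.card + B.card := by exact_mod_cast hcover
  linarith

theorem exists_forall_half_lt_norm_sq_starProjection_orthogonal {b : ι → E}
    (hb : IsBesselSequence b C) (hC : 0 ≤ C) {S : Finset ι} (hbS : ∀ j ∈ S, 3 / 4 ≤ ‖b j‖ ^ 2)
    {m : ℕ} (hm : 4 * ((m : ℝ) - 1) * C < S.card) :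
    ∃ f : Fin m → ι, (∀ k, f k ∈ S) ∧ Function.Injective f ∧
      ∀ k, 1 / 2 < ‖(spanExcept ℝ (b ∘ f) k)ᗮ.starProjection (b (f k))‖ ^ 2 := by
  have hcapture : ∀ W : Submodule ℝ E, finrank ℝ W < m →
      ∃ j ∈ S, ‖W.starProjection (b j)‖ ^ 2 < 1 / 4 := by
    intro W hW
    have hW' : (finrank ℝ W : ℝ) ≤ m - 1 := by
      rw [le_sub_iff_add_le]; exact_mod_cast hW
    apply Finset.exists_lt_of_sum_lt
    calc ∑ j ∈ S, ‖W.starProjection (b j)‖ ^ 2 ≤ ∑ j, ‖W.starProjection (b j)‖ ^ 2 :=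
          Finset.sum_le_sum_of_subset_of_nonneg (Finset.subset_univ _) fun _ _ _ => sq_nonneg _
      _ ≤ finrank ℝ W * C := hb.sum_norm_sq_starProjection_le W
      _ ≤ (m - 1) * C := by gcongr
      _ < ∑ _j ∈ S, 1 / 4 := by rw [Finset.sum_const, nsmul_eq_mul]; linarith
  have hnotMem : ∀ W : Submodule ℝ E, finrank ℝ W < m → ∃ j : S, b j ∉ W := by
    intro W hW
    obtain ⟨j, hjS, hj⟩ := hcapture W hW
    refine ⟨⟨j, hjS⟩, fun hmem => ?_⟩
    rw [starProjection_eq_self_iff.2 hmem] at hj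
    linarith [hbS j hjS]
  obtain ⟨f, hf, hmax⟩ := exists_linearIndependent_forall_norm_starProjection_orthogonal_le
    (fun j : S => b j) (exists_linearIndependent_comp_of_forall_exists_notMem _ hnotMem)
  refine ⟨fun k => f k, fun k => (f k).2, Subtype.val_injective.comp hf.injective.of_comp,
    fun k => ?_⟩
  by_contra! hk
  set W := spanExcept ℝ (b ∘ fun k => (f k : ι)) k
  obtain ⟨j, hjS, hj⟩ := hcapture W ((finrank_range_le_card _).trans_lt (by simpa using k.pos))
  have hjk : ‖Wᗮ.starProjection (b j)‖ ^ 2 ≤ ‖Wᗮ.starProjection (b (f k))‖ ^ 2 :=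
    pow_le_pow_left₀ (norm_nonneg _) (hmax k ⟨j, hjS⟩) 2
  linarith [hbS j hjS, norm_sq_eq_add_norm_sq_starProjection (b j) W]

theorem exists_disjoint_forall_norm_sq_starProjection_span_lt [DecidableEq ι] {v : ι → E}
    (hv : IsBesselSequence v C) (hv1 : ∀ i, ‖v i‖ = 1) {d : ℝ} (hd0 : 0 ≤ d) (hd : 9 * d ≤ 1)
    (σ₁ : Finset ι) (hσ₁ : (σ₁.card : ℝ) ≤ d * Fintype.card ι / C) :
    ∃ σ₂ : Finset ι, Disjoint σ₁ σ₂ ∧ d * Fintype.card ι / C ≤ σ₂.card ∧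
      ∀ i ∈ σ₂, ‖(span ℝ (v '' ↑((σ₁ ∪ σ₂).erase i))).starProjection (v i)‖ ^ 2 < 1 / 2 := by
  rcases isEmpty_or_nonempty ι with hι | ⟨⟨i₀⟩⟩
  · exact ⟨∅, Finset.disjoint_empty_right _, by simp, by simp⟩
  have hC : 1 ≤ C := hv.one_le_of_norm_eq_one (hv1 i₀)
  set V₁ := span ℝ (v '' σ₁)
  set S := Finset.univ.filter fun j => j ∉ σ₁ ∧ ‖V₁.starProjection (v j)‖ ^ 2 ≤ 1 / 4
  set t := d * Fintype.card ι / C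
  have hbS : ∀ j ∈ S, 3 / 4 ≤ ‖V₁ᗮ.starProjection (v j)‖ ^ 2 := fun j hj => by
    have := norm_sq_eq_add_norm_sq_starProjection (v j) V₁
    rw [hv1] at this
    linarith [(Finset.mem_filter.1 hj).2.2]
  have hm : 4 * ((⌈t⌉₊ : ℝ) - 1) * C < S.card := by
    have hS : (Fintype.card ι : ℝ) ≤ S.card + (1 + 4 * C) * σ₁.card :=
      hv.card_le_card_filter_add_mul_card (by linarith) σ₁
    have hσ₁C : σ₁.card * C ≤ d * Fintype.card ι := (le_div_iff₀ (by linarith)).1 hσ₁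
    have hσ₁C' : (σ₁.card : ℝ) ≤ σ₁.card * C := le_mul_of_one_le_right (Nat.cast_nonneg _) hC
    have hmC : ((⌈t⌉₊ : ℝ) - 1) * C < d * Fintype.card ι :=
      (lt_div_iff₀ (by linarith)).1 (by linarith [Nat.ceil_lt_add_one (by positivity : 0 ≤ t)])
    have h9 : 9 * d * Fintype.card ι ≤ Fintype.card ι := mul_le_of_le_one_left (by positivity) hd
    linarith
  obtain ⟨f, hfS, hf, hsep⟩ :=
    (hv.starProjection V₁ᗮ).exists_forall_half_lt_norm_sq_starProjection_orthogonal
      (by linarith) hbS hm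
  refine ⟨Finset.univ.image f, ?_, ?_, fun _ hi => ?_⟩
  · refine Finset.disjoint_left.2 fun j hj hj' => ?_
    obtain ⟨k, -, rfl⟩ := Finset.mem_image.1 hj'
    exact (Finset.mem_filter.1 (hfS k)).2.1 hj
  · rw [Finset.card_image_of_injective _ hf, Finset.card_univ, Fintype.card_fin]
    exact Nat.le_ceil t
  obtain ⟨k, -, rfl⟩ := Finset.mem_image.1 hi
  set U := span ℝ (v '' ↑((σ₁ ∪ Finset.univ.image f).erase (f k)))
  have hdist : ‖(spanExcept ℝ ((fun j => V₁ᗮ.starProjection (v j)) ∘ f) k)ᗮ.starProjection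
      (V₁ᗮ.starProjection (v (f k)))‖ ≤ ‖Uᗮ.starProjection (v (f k))‖ :=
    norm_starProjection_orthogonal_map_le (starProjection_norm_le _)
      (span_image_erase_union_image_le_comap_spanExcept v σ₁ f k) (v (f k))
  have hpyth := norm_sq_eq_add_norm_sq_starProjection (v (f k)) U
  rw [hv1] at hpyth
  linarith [hsep k, pow_le_pow_left₀ (norm_nonneg _) hdist 2]

end IsBesselSequence

end FiniteDimensional

theorem opNorm_eq_norm_toEuclideanCLM {n : ℕ} (A : Matrix (Fin n) (Fin n) ℝ) :
    opNorm A = ‖Matrix.toEuclideanCLM (𝕜 := ℝ) A‖ := by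
  rw [← ContinuousLinearMap.sSup_sphere_eq_norm, opNorm]
  congr 1
  ext c
  simp [eq_comm, ← Matrix.coe_toEuclideanCLM_eq_toEuclideanLin]

/-- **First step of the Bourgain–Tzafriri argument.** There is a constant `d₁ > 0`
(one may take `d₁ = 1/320`) such that for every matrix `A` with unit-length columns and
every `σ₁` with `|σ₁| ≤ d₁n‖A‖⁻²`, there is `σ₂` disjoint from `σ₁` with
`|σ₂| ≥ d₁n‖A‖⁻²` such that for every `i ∈ σ₂` the orthogonal projection of `Aeᵢ` onto
`span{Aeⱼ : j ∈ (σ₁ ∪ σ₂) \ {i}}` has norm less than `1/√2`. -/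
theorem bourgain_tzafriri_step_one :
    ∃ d₁ : ℝ, 0 < d₁ ∧
      ∀ (n : ℕ) (A : Matrix (Fin n) (Fin n) ℝ),
        (∀ i : Fin n, ‖Matrix.toEuclideanLin A (EuclideanSpace.single i (1:ℝ))‖ = 1) →
        ∀ σ₁ : Finset (Fin n), (σ₁.card : ℝ) ≤ d₁ * n / opNorm A ^ 2 →
          ∃ σ₂ : Finset (Fin n), Disjoint σ₁ σ₂ ∧
            d₁ * n / opNorm A ^ 2 ≤ (σ₂.card : ℝ) ∧
            ∀ i ∈ σ₂,
              ‖(Submodule.orthogonalProjectionOnto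
                  (Submodule.span ℝ
                    ((fun j => Matrix.toEuclideanLin A (EuclideanSpace.single j (1:ℝ))) ''
                      (((σ₁ ∪ σ₂).erase i : Finset (Fin n)) : Set (Fin n))))
                  (Matrix.toEuclideanLin A (EuclideanSpace.single i (1:ℝ))) :
                EuclideanSpace ℝ (Fin n))‖ < 1 / Real.sqrt 2 := by
  refine ⟨1 / 320, by norm_num, fun n A hcol σ₁ hσ₁ => ?_⟩
  have hv : IsBesselSequence (fun j => Matrix.toEuclideanLin A (EuclideanSpace.single j (1 : ℝ)))
      (opNorm A ^ 2) := by
    rw [opNorm_eq_norm_toEuclideanCLM]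
    simpa [← Matrix.coe_toEuclideanCLM_eq_toEuclideanLin] using
      isBesselSequence_apply_orthonormalBasis (Matrix.toEuclideanCLM (𝕜 := ℝ) A)
        (EuclideanSpace.basisFun (Fin n) ℝ)
  obtain ⟨σ₂, hdisj, hcard, hsep⟩ := hv.exists_disjoint_forall_norm_sq_starProjection_span_lt hcol
    (d := 1 / 320) (by norm_num) (by norm_num) σ₁ (by simpa using hσ₁)
  refine ⟨σ₂, hdisj, by simpa using hcard, fun i hi => ?_⟩
  rw [coe_orthogonalProjectionOnto_apply, one_div, ← Real.sqrt_inv, Real.lt_sqrt (norm_nonneg _)]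
  simpa using hsep i hi
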